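/- arXiv:nlin/0510068 — 2 statements merged into one kernel-verified Lean document; each statement's English description precedes it below -/
import Mathlib

section
/- Let A be a commutative ring with a derivation d : A → A, and on A[T,T⁻¹] let {f,g}_r := T^r·(∂_T f · D g − D f · ∂_T g). Let m, N, k, r ∈ ℤ, let L ∈ A[T,T⁻¹] be supported in degrees −m ≤ i ≤ N, and let X ∈ A[T,T⁻¹] satisfy {X, L}_r = 0 (for example X = L^j for any j ∈ ℕ). Then {P_{≥k−r} X, L}_r is supported in degrees i with k−1−m ≤ i ≤ N+k−2, where P_{≥k−r} is the projection retaining terms of degree ≥ k−r. -/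
open LaurentPolynomial

variable {A : Type*} [CommRing A]

/-- Formal derivative `∂_T` on Laurent polynomials: `∂_T (a·Tⁿ) = n·a·Tⁿ⁻¹`. -/
noncomputable def tder (f : A[T;T⁻¹]) : A[T;T⁻¹] :=
  Finsupp.sum f.coeff fun n a => C (n • a) * T (n - 1)

/-- Coefficientwise extension `D` of a derivation `d : A → A`: `D (a·Tⁿ) = d(a)·Tⁿ`. -/
noncomputable def cder (d : A → A) (f : A[T;T⁻¹]) : A[T;T⁻¹] :=
  Finsupp.sum f.coeff fun n a => C (d a) * T n

/-- The bracket `{f,g}_r := T^r·(∂_T f · D g − D f · ∂_T g)`. -/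
noncomputable def lbr (d : A → A) (r : ℤ) (f g : A[T;T⁻¹]) : A[T;T⁻¹] :=
  T r * (tder f * cder d g - cder d f * tder g)

/-- Projection onto the terms of degree `≥ s`. -/
noncomputable def Pge (s : ℤ) (f : A[T;T⁻¹]) : A[T;T⁻¹] :=
  Finsupp.sum f.coeff fun n a => if s ≤ n then C a * T n else 0

lemma lp_mul_apply_eq_zero (f g : A[T;T⁻¹]) (x : ℤ)
    (h : ∀ a b : ℤ, a + b = x → f.coeff a = 0 ∨ g.coeff b = 0) : (f * g).coeff x = 0 := by
  rw [AddMonoidAlgebra.coeff_mul, Finsupp.sum]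
  apply Finset.sum_eq_zero
  intro a _
  rw [Finsupp.sum]
  apply Finset.sum_eq_zero
  intro b _
  split_ifs with hab
  · rcases h a b hab with h' | h' <;> simp [h']
  · rfl

lemma CT_apply (a : A) (n j : ℤ) : (C a * T n : A[T;T⁻¹]).coeff j = if n = j then a else 0 := by
  rw [← single_eq_C_mul_T, AddMonoidAlgebra.coeff_single]
  exact Finsupp.single_apply

lemma tder_apply (f : A[T;T⁻¹]) (i : ℤ) : (tder f).coeff i = (i + 1) • f.coeff (i + 1) := by
  rw [tder, Finsupp.sum, AddMonoidAlgebra.coeff_sum, Finsupp.finset_sum_apply]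
  rw [Finset.sum_eq_single (i + 1)]
  · rw [CT_apply]; simp
  · intro n _ hn
    rw [CT_apply, if_neg (by omega)]
  · intro h
    rw [Finsupp.notMem_support_iff.mp h]
    rw [CT_apply]; simp

lemma cder_apply (d : A → A) (hd0 : d 0 = 0) (f : A[T;T⁻¹]) (i : ℤ) :
    (cder d f).coeff i = d (f.coeff i) := by
  rw [cder, Finsupp.sum, AddMonoidAlgebra.coeff_sum, Finsupp.finset_sum_apply]
  rw [Finset.sum_eq_single i]
  · rw [CT_apply]; simp
  · intro n _ hn
    rw [CT_apply, if_neg (by omega)]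
  · intro h
    rw [Finsupp.notMem_support_iff.mp h, hd0]
    rw [CT_apply]; simp

lemma Pge_apply (s : ℤ) (f : A[T;T⁻¹]) (j : ℤ) :
    (Pge s f).coeff j = if s ≤ j then f.coeff j else 0 := by
  rw [Pge, Finsupp.sum, AddMonoidAlgebra.coeff_sum, Finsupp.finset_sum_apply]
  rw [Finset.sum_eq_single j]
  · split_ifs with h
    · rw [CT_apply]; simp
    · rfl
  · intro n _ hn
    split_ifs with h
    · rw [CT_apply, if_neg (by omega)]
    · rfl
  · intro h
    rw [Finsupp.notMem_support_iff.mp h]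
    split_ifs
    · rw [CT_apply]; simp
    · rfl

lemma add_apply' (f g : A[T;T⁻¹]) (i : ℤ) : (f + g).coeff i = f.coeff i + g.coeff i := rfl

lemma sub_apply' (f g : A[T;T⁻¹]) (i : ℤ) : (f - g).coeff i = f.coeff i - g.coeff i := rfl

lemma neg_apply' (f : A[T;T⁻¹]) (i : ℤ) : (-f).coeff i = -(f.coeff i) := rfl

lemma tder_add (f g : A[T;T⁻¹]) : tder (f + g) = tder f + tder g := by
  ext i
  simp [tder_apply, add_apply', smul_add]

lemma cder_add (d : A → A) (hd0 : d 0 = 0)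
    (hd_add : ∀ a b : A, d (a + b) = d a + d b) (f g : A[T;T⁻¹]) :
    cder d (f + g) = cder d f + cder d g := by
  ext i
  simp [cder_apply d hd0, add_apply', hd_add]

lemma lbr_add_left (d : A → A) (hd0 : d 0 = 0)
    (hd_add : ∀ a b : A, d (a + b) = d a + d b) (r : ℤ) (f g h : A[T;T⁻¹]) :
    lbr d r (f + g) h = lbr d r f h + lbr d r g h := by
  simp only [lbr, tder_add, cder_add d hd0 hd_add]
  ring

/-- If `L` is supported in degrees `−m ≤ i ≤ N` and `{X, L}_r = 0`, then
`{P_{≥k−r} X, L}_r` is supported in degrees `k−1−m ≤ i ≤ N+k−2`. -/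
theorem degree_bookkeeping (d : A → A)
    (hd_add : ∀ a b : A, d (a + b) = d a + d b)
    (hd_mul : ∀ a b : A, d (a * b) = a * d b + d a * b)
    (m N k r : ℤ) (L X : A[T;T⁻¹])
    (hL : ∀ i : ℤ, i < -m ∨ N < i → L.coeff i = 0)
    (hX : lbr d r X L = 0) :
    ∀ i : ℤ, i < k - 1 - m ∨ N + k - 2 < i → (lbr d r (Pge (k - r) X) L).coeff i = 0 := by
  have hd0 : d 0 = 0 := by
    have := hd_add 0 0
    simp at this
    linear_combination this
  set P : A[T;T⁻¹] := Pge (k - r) X with hPdef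
  set Q : A[T;T⁻¹] := X - P with hQdef
  have hPQ : P + Q = X := by rw [hQdef]; ring
  have hP : ∀ j : ℤ, j < k - r → P.coeff j = 0 := by
    intro j hj
    rw [hPdef, Pge_apply, if_neg (by omega)]
  have hQ : ∀ j : ℤ, k - r ≤ j → Q.coeff j = 0 := by
    intro j hj
    rw [hQdef, sub_apply', hPdef, Pge_apply, if_pos hj, sub_self]
  have hsplit : lbr d r P L = - lbr d r Q L := by
    have : lbr d r P L + lbr d r Q L = 0 := by
      rw [← lbr_add_left d hd0 hd_add, hPQ, hX]
    linear_combination this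
  have hcL : ∀ b : ℤ, b < -m ∨ N < b → (cder d L).coeff b = 0 := by
    intro b hb; rw [cder_apply d hd0, hL b hb, hd0]
  have htL : ∀ b : ℤ, b + 1 < -m ∨ N < b + 1 → (tder L).coeff b = 0 := by
    intro b hb; rw [tder_apply, hL (b + 1) hb, smul_zero]
  intro i hi
  rcases hi with hi | hi
  · -- lower bound: direct estimate on lbr d r P L
    rw [lbr]
    apply lp_mul_apply_eq_zero
    intro a b hab
    by_cases ha : a = r
    · right
      have hb : b = i - r := by omega
      subst hb
      have h1 : (tder P * cder d L).coeff (i - r) = 0 := by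
        apply lp_mul_apply_eq_zero
        intro x y hxy
        by_cases hx : x + 1 < k - r
        · left; rw [tder_apply, hP (x + 1) hx, smul_zero]
        · right; exact hcL y (Or.inl (by omega))
      have h2 : (cder d P * tder L).coeff (i - r) = 0 := by
        apply lp_mul_apply_eq_zero
        intro x y hxy
        by_cases hx : x < k - r
        · left; rw [cder_apply d hd0, hP x hx, hd0]
        · right; exact htL y (Or.inl (by omega))
      rw [sub_apply', h1, h2, sub_self]
    · left
      rw [T_apply, if_neg (fun h => ha h.symm)]
  · -- upper bound: via lbr d r Q L
    have key : (lbr d r Q L).coeff i = 0 := by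
      rw [lbr]
      apply lp_mul_apply_eq_zero
      intro a b hab
      by_cases ha : a = r
      · right
        have hb : b = i - r := by omega
        subst hb
        have h1 : (tder Q * cder d L).coeff (i - r) = 0 := by
          apply lp_mul_apply_eq_zero
          intro x y hxy
          by_cases hx : k - r ≤ x + 1
          · left; rw [tder_apply, hQ (x + 1) hx, smul_zero]
          · right; exact hcL y (Or.inr (by omega))
        have h2 : (cder d Q * tder L).coeff (i - r) = 0 := by
          apply lp_mul_apply_eq_zero
          intro x y hxy
          by_cases hx : k - r ≤ x
          · left; rw [cder_apply d hd0, hQ x hx, hd0]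
          · right; exact htL y (Or.inr (by omega))
        rw [sub_apply', h1, h2, sub_self]
      · left
        rw [T_apply, if_neg (fun h => ha h.symm)]
    rw [hsplit, neg_apply', key, neg_zero]
end

section
/- Let A be a commutative ring with a derivation d : A → A, and on A[T,T⁻¹] let {f,g}_r := T^r·(∂_T f · D g − D f · ∂_T g), let res denote the coefficient of T⁻¹, and let P_{≥s}, P_{<s} be the projections onto terms of degree ≥ s, < s. Then for all f, h, L ∈ A[T,T⁻¹], all n ∈ ℕ, and all k, r ∈ ℤ, the element res(T^{−r}·f·{L, P_{<k−r}(Lⁿ·h)}_r) − res(T^{−r}·h·Lⁿ·P_{≥2r−k}({f,L}_r)) of A lies in the image of d (it is a total derivative). -/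
open LaurentPolynomial

variable {A : Type*} [CommRing A]

/-- The residue (coefficient of `T⁻¹`). -/
noncomputable def res (f : A[T;T⁻¹]) : A := f.coeff (-1)

/-- Projection onto the terms of degree `< s`. -/
noncomputable def Plt (s : ℤ) (f : A[T;T⁻¹]) : A[T;T⁻¹] :=
  Finsupp.sum f.coeff fun n a => if n < s then C a * T n else 0

lemma tr1_T_single (a : ℤ) : (T a : A[T;T⁻¹]) = AddMonoidAlgebra.single a 1 := by
  rw [single_eq_C_mul_T]; simp

lemma tr1_CT_apply (n m : ℤ) (a : A) : (C a * T n : A[T;T⁻¹]).coeff m = if n = m then a else 0 := by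
  rw [← single_eq_C_mul_T]; exact Finsupp.single_apply

lemma tr1_tder_apply (f : A[T;T⁻¹]) (m : ℤ) : (tder f).coeff m = (m + 1) • f.coeff (m + 1) := by
  unfold tder
  rw [AddMonoidAlgebra.coeff_finsuppSum, Finsupp.sum_apply]
  have h1 : (Finsupp.sum f.coeff fun n a => (C (n • a) * T (n - 1) : A[T;T⁻¹]).coeff m)
      = Finsupp.sum f.coeff fun n a => if n = m + 1 then (m + 1) • a else 0 := by
    apply Finsupp.sum_congr
    intro n _
    rw [tr1_CT_apply]
    by_cases hn : n = m + 1
    · subst hn; simp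
    · rw [if_neg (by omega), if_neg hn]
  rw [h1, Finsupp.sum_ite_eq']
  by_cases hm : m + 1 ∈ f.coeff.support
  · rw [if_pos hm]
  · rw [if_neg hm, Finsupp.notMem_support_iff.mp hm, smul_zero]

section
variable {d : A → A} (hd0 : d 0 = 0)
include hd0

lemma tr1_cder_apply (f : A[T;T⁻¹]) (m : ℤ) : (cder d f).coeff m = d (f.coeff m) := by
  unfold cder
  rw [AddMonoidAlgebra.coeff_finsuppSum, Finsupp.sum_apply]
  have h1 : (Finsupp.sum f.coeff fun n a => (C (d a) * T n : A[T;T⁻¹]).coeff m)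
      = Finsupp.sum f.coeff fun n a => if n = m then d a else 0 := by
    apply Finsupp.sum_congr
    intro n _
    rw [tr1_CT_apply]
  rw [h1, Finsupp.sum_ite_eq']
  by_cases hm : m ∈ f.coeff.support
  · rw [if_pos hm]
  · rw [if_neg hm, Finsupp.notMem_support_iff.mp hm, hd0]
end

lemma tr1_Pge_apply (s : ℤ) (f : A[T;T⁻¹]) (m : ℤ) :
    (Pge s f).coeff m = if s ≤ m then f.coeff m else 0 := by
  unfold Pge
  rw [AddMonoidAlgebra.coeff_finsuppSum, Finsupp.sum_apply]
  have h1 : (Finsupp.sum f.coeff fun n a => (if s ≤ n then (C a * T n : A[T;T⁻¹]) else 0).coeff m)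
      = Finsupp.sum f.coeff fun n a => if n = m then (if s ≤ m then a else 0) else 0 := by
    apply Finsupp.sum_congr
    intro n _
    by_cases hn : n = m
    · subst hn
      by_cases hs : s ≤ n
      · rw [if_pos hs, tr1_CT_apply]; simp [hs]
      · rw [if_neg hs]; simp [hs]
    · split_ifs <;> simp [tr1_CT_apply, hn]
  rw [h1, Finsupp.sum_ite_eq']
  by_cases hm : m ∈ f.coeff.support
  · rw [if_pos hm]
  · rw [if_neg hm, Finsupp.notMem_support_iff.mp hm, ite_self]

lemma tr1_Plt_apply (s : ℤ) (f : A[T;T⁻¹]) (m : ℤ) :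
    (Plt s f).coeff m = if m < s then f.coeff m else 0 := by
  unfold Plt
  rw [AddMonoidAlgebra.coeff_finsuppSum, Finsupp.sum_apply]
  have h1 : (Finsupp.sum f.coeff fun n a => (if n < s then (C a * T n : A[T;T⁻¹]) else 0).coeff m)
      = Finsupp.sum f.coeff fun n a => if n = m then (if m < s then a else 0) else 0 := by
    apply Finsupp.sum_congr
    intro n _
    by_cases hn : n = m
    · subst hn
      by_cases hs : n < s
      · rw [if_pos hs, tr1_CT_apply]; simp [hs]
      · rw [if_neg hs]; simp [hs]
    · split_ifs <;> simp [tr1_CT_apply, hn]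
  rw [h1, Finsupp.sum_ite_eq']
  by_cases hm : m ∈ f.coeff.support
  · rw [if_pos hm]
  · rw [if_neg hm, Finsupp.notMem_support_iff.mp hm, ite_self]

-- ext lemma
lemma tr1_ext {f g : A[T;T⁻¹]} (h : ∀ m : ℤ, f.coeff m = g.coeff m) : f = g := LaurentPolynomial.ext h

lemma tr1_tder_add (u v : A[T;T⁻¹]) : tder (u + v) = tder u + tder v := by
  apply tr1_ext; intro m
  rw [AddMonoidAlgebra.coeff_add, Finsupp.add_apply, tr1_tder_apply, tr1_tder_apply, tr1_tder_apply, AddMonoidAlgebra.coeff_add, Finsupp.add_apply,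
    smul_add]

lemma tr1_tder_zero : tder (0 : A[T;T⁻¹]) = 0 := by
  apply tr1_ext; intro m
  rw [tr1_tder_apply]; simp

section
variable {d : A → A} (hd_add : ∀ a b : A, d (a + b) = d a + d b)
include hd_add

lemma tr1_hd0 : d 0 = 0 := by
  have := hd_add 0 0
  simpa using this

lemma tr1_cder_add (u v : A[T;T⁻¹]) : cder d (u + v) = cder d u + cder d v := by
  apply tr1_ext; intro m
  rw [AddMonoidAlgebra.coeff_add, Finsupp.add_apply, tr1_cder_apply (tr1_hd0 hd_add), tr1_cder_apply (tr1_hd0 hd_add),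
    tr1_cder_apply (tr1_hd0 hd_add), AddMonoidAlgebra.coeff_add, Finsupp.add_apply, hd_add]

lemma tr1_cder_zero : cder d (0 : A[T;T⁻¹]) = 0 := by
  apply tr1_ext; intro m
  rw [tr1_cder_apply (tr1_hd0 hd_add)]
  simp [tr1_hd0 hd_add]

lemma tr1_cder_zsmul (z : ℤ) (a : A) : d (z • a) = z • d a :=
  map_zsmul (AddMonoidHom.mk' d hd_add) z a

lemma tr1_comm (u : A[T;T⁻¹]) : cder d (tder u) = tder (cder d u) := by
  apply tr1_ext; intro m
  rw [tr1_cder_apply (tr1_hd0 hd_add), tr1_tder_apply, tr1_tder_apply,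
    tr1_cder_apply (tr1_hd0 hd_add), tr1_cder_zsmul hd_add]
end

-- singles
lemma tr1_cder_single {d : A → A} (hd0 : d 0 = 0) (n : ℤ) (a : A) :
    cder d (C a * T n) = C (d a) * T n := by
  rw [← single_eq_C_mul_T, ← single_eq_C_mul_T]
  unfold cder
  rw [AddMonoidAlgebra.coeff_single, Finsupp.sum_single_index]
  · rw [single_eq_C_mul_T]
  · rw [hd0]; simp

lemma tr1_tder_single (n : ℤ) (a : A) :
    tder (C a * T n : A[T;T⁻¹]) = C (n • a) * T (n - 1) := by
  rw [← single_eq_C_mul_T]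
  unfold tder
  rw [AddMonoidAlgebra.coeff_single, Finsupp.sum_single_index]
  simp

lemma tr1_cder_single' {d : A → A} (hd0 : d 0 = 0) (n : ℤ) (a : A) :
    cder d (AddMonoidAlgebra.single n a : A[T;T⁻¹]) = AddMonoidAlgebra.single n (d a) := by
  unfold cder
  rw [AddMonoidAlgebra.coeff_single, Finsupp.sum_single_index]
  · rw [single_eq_C_mul_T]
  · rw [hd0]; simp

lemma tr1_tder_single' (n : ℤ) (a : A) :
    tder (AddMonoidAlgebra.single n a : A[T;T⁻¹]) = AddMonoidAlgebra.single (n - 1) (n • a) := by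
  unfold tder
  rw [AddMonoidAlgebra.coeff_single, Finsupp.sum_single_index]
  · rw [single_eq_C_mul_T]
  · simp

section
variable {d : A → A} (hd_add : ∀ a b : A, d (a + b) = d a + d b)
    (hd_mul : ∀ a b : A, d (a * b) = a * d b + d a * b)
include hd_add hd_mul

lemma tr1_cder_mul (u v : A[T;T⁻¹]) :
    cder d (u * v) = u * cder d v + cder d u * v := by
  induction u using AddMonoidAlgebra.induction_linear with
  | zero => simp [tr1_cder_zero hd_add]
  | add p q hp hq =>
      rw [add_mul, tr1_cder_add hd_add, hp, hq, tr1_cder_add hd_add, add_mul]; ring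
  | single p a =>
      induction v using AddMonoidAlgebra.induction_linear with
      | zero => simp [tr1_cder_zero hd_add]
      | add p' q' hp' hq' =>
          rw [mul_add, tr1_cder_add hd_add, hp', hq', tr1_cder_add hd_add, mul_add]; ring
      | single q b =>
          rw [AddMonoidAlgebra.single_mul_single, tr1_cder_single' (tr1_hd0 hd_add),
            tr1_cder_single' (tr1_hd0 hd_add), tr1_cder_single' (tr1_hd0 hd_add),
            AddMonoidAlgebra.single_mul_single, AddMonoidAlgebra.single_mul_single,
            hd_mul, ← AddMonoidAlgebra.single_add]

lemma tr1_tder_mul (u v : A[T;T⁻¹]) :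
    tder (u * v) = u * tder v + tder u * v := by
  induction u using AddMonoidAlgebra.induction_linear with
  | zero => simp [tr1_tder_zero]
  | add p q hp hq =>
      rw [add_mul, tr1_tder_add, hp, hq, tr1_tder_add, add_mul]; ring
  | single p a =>
      induction v using AddMonoidAlgebra.induction_linear with
      | zero => simp [tr1_tder_zero]
      | add p' q' hp' hq' =>
          rw [mul_add, tr1_tder_add, hp', hq', tr1_tder_add, mul_add]; ring
      | single q b =>
          rw [AddMonoidAlgebra.single_mul_single, tr1_tder_single', tr1_tder_single',
            tr1_tder_single', AddMonoidAlgebra.single_mul_single,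
            AddMonoidAlgebra.single_mul_single]
          have h3 : p + (q - 1) = p + q - 1 := by ring
          have h4 : (p - 1) + q = p + q - 1 := by ring
          rw [h3, h4, ← AddMonoidAlgebra.single_add]
          congr 1
          rw [add_smul, mul_smul_comm, smul_mul_assoc, add_comm]
end

-- res lemmas
lemma tr1_res_sub (u v : A[T;T⁻¹]) : res (u - v) = res u - res v := by
  unfold res; exact Finsupp.sub_apply u.coeff v.coeff (-1)

lemma tr1_res_tder (u : A[T;T⁻¹]) : res (tder u) = 0 := by
  unfold res; rw [tr1_tder_apply]; simp

lemma tr1_res_cder {d : A → A} (hd0 : d 0 = 0) (u : A[T;T⁻¹]) :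
    res (cder d u) = d (res u) := by
  unfold res; rw [tr1_cder_apply hd0]

lemma tr1_T_mul_apply (a : ℤ) (g : A[T;T⁻¹]) (m : ℤ) :
    ((T a : A[T;T⁻¹]) * g).coeff m = g.coeff (m - a) := by
  rw [tr1_T_single]
  rw [AddMonoidAlgebra.coeff_single_mul_apply]
  rw [one_mul, neg_add_eq_sub]

lemma tr1_Plt_T_mul (s a : ℤ) (g : A[T;T⁻¹]) :
    Plt s (T a * g) = T a * Plt (s - a) g := by
  apply tr1_ext; intro m
  rw [tr1_Plt_apply, tr1_T_mul_apply, tr1_T_mul_apply, tr1_Plt_apply]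
  by_cases hm : m < s
  · rw [if_pos hm, if_pos (by omega)]
  · rw [if_neg hm, if_neg (by omega)]

lemma tr1_res_add (u v : A[T;T⁻¹]) : res (u + v) = res u + res v := by
  unfold res; exact Finsupp.add_apply u.coeff v.coeff (-1)

lemma tr1_res_single (n : ℤ) (a : A) :
    res (AddMonoidAlgebra.single n a : A[T;T⁻¹]) = if n = -1 then a else 0 := by
  unfold res; exact Finsupp.single_apply

lemma tr1_Pge_add (s : ℤ) (u v : A[T;T⁻¹]) : Pge s (u + v) = Pge s u + Pge s v := by
  apply tr1_ext; intro m
  rw [AddMonoidAlgebra.coeff_add, Finsupp.add_apply, tr1_Pge_apply, tr1_Pge_apply, tr1_Pge_apply, AddMonoidAlgebra.coeff_add, Finsupp.add_apply]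
  split_ifs <;> simp

lemma tr1_Plt_add (s : ℤ) (u v : A[T;T⁻¹]) : Plt s (u + v) = Plt s u + Plt s v := by
  apply tr1_ext; intro m
  rw [AddMonoidAlgebra.coeff_add, Finsupp.add_apply, tr1_Plt_apply, tr1_Plt_apply, tr1_Plt_apply, AddMonoidAlgebra.coeff_add, Finsupp.add_apply]
  split_ifs <;> simp

lemma tr1_Pge_zero (s : ℤ) : Pge s (0 : A[T;T⁻¹]) = 0 := by
  apply tr1_ext; intro m; rw [tr1_Pge_apply]; simp

lemma tr1_Plt_zero (s : ℤ) : Plt s (0 : A[T;T⁻¹]) = 0 := by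
  apply tr1_ext; intro m; rw [tr1_Plt_apply]; simp

lemma tr1_Pge_single (s n : ℤ) (a : A) :
    Pge s (AddMonoidAlgebra.single n a : A[T;T⁻¹]) =
      if s ≤ n then (AddMonoidAlgebra.single n a : A[T;T⁻¹]) else 0 := by
  unfold Pge
  rw [AddMonoidAlgebra.coeff_single, Finsupp.sum_single_index]
  · rw [single_eq_C_mul_T]
  · split_ifs <;> simp

lemma tr1_Plt_single (s n : ℤ) (a : A) :
    Plt s (AddMonoidAlgebra.single n a : A[T;T⁻¹]) =
      if n < s then (AddMonoidAlgebra.single n a : A[T;T⁻¹]) else 0 := by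
  unfold Plt
  rw [AddMonoidAlgebra.coeff_single, Finsupp.sum_single_index]
  · rw [single_eq_C_mul_T]
  · split_ifs <;> simp

lemma tr1_adjoint (s : ℤ) (u v : A[T;T⁻¹]) :
    res (u * Pge s v) = res (Plt (-s) u * v) := by
  induction u using AddMonoidAlgebra.induction_linear with
  | zero => simp [tr1_Plt_zero]
  | add p q hp hq =>
      rw [add_mul, tr1_res_add, hp, hq, tr1_Plt_add, add_mul, tr1_res_add]
  | single p a =>
      induction v using AddMonoidAlgebra.induction_linear with
      | zero => simp [tr1_Pge_zero]
      | add p' q' hp' hq' =>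
          rw [tr1_Pge_add, mul_add, tr1_res_add, hp', hq', mul_add, tr1_res_add]
      | single q b =>
          rw [tr1_Pge_single, tr1_Plt_single]
          by_cases hq : s ≤ q
          · rw [if_pos hq]
            by_cases hp : p < -s
            · rw [if_pos hp]
            · rw [if_neg hp, zero_mul, AddMonoidAlgebra.single_mul_single, tr1_res_single]
              rw [if_neg (by omega)]
              simp [res]
          · rw [if_neg hq, mul_zero]
            by_cases hp : p < -s
            · rw [if_pos hp, AddMonoidAlgebra.single_mul_single, tr1_res_single,
                if_neg (by omega)]
              simp [res]
            · rw [if_neg hp, zero_mul]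

/-- For all `f, h, L ∈ A[T,T⁻¹]`, `n ∈ ℕ`, and `k, r ∈ ℤ`, the element
`res(T^{−r}·f·{L, P_{<k−r}(Lⁿ·h)}_r) − res(T^{−r}·h·Lⁿ·P_{≥2r−k}({f,L}_r))` is a total
derivative (lies in the image of `d`). -/
theorem trace_relation_one (d : A → A)
    (hd_add : ∀ a b : A, d (a + b) = d a + d b)
    (hd_mul : ∀ a b : A, d (a * b) = a * d b + d a * b)
    (f h L : A[T;T⁻¹]) (n : ℕ) (k r : ℤ) :
    res (T (-r) * (f * lbr d r L (Plt (k - r) (L ^ n * h)))) -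
      res (T (-r) * (h * (L ^ n * Pge (2 * r - k) (lbr d r f L)))) ∈ Set.range d := by
  have hd0 : d 0 = 0 := tr1_hd0 hd_add
  have hdneg : ∀ x : A, d (-x) = -d x := by
    intro x
    have h1 := hd_add (-x) x
    rw [neg_add_cancel x, hd0] at h1
    exact eq_neg_of_add_eq_zero_left h1.symm
  set W : A[T;T⁻¹] := L ^ n * h with hW
  set P : A[T;T⁻¹] := Plt (k - r) W with hP
  set Y1 : A[T;T⁻¹] := tder L * cder d P - cder d L * tder P with hY1
  set Y2 : A[T;T⁻¹] := tder f * cder d L - cder d f * tder L with hY2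
  have hT : (T (-r) : A[T;T⁻¹]) * T r = 1 := by
    rw [← T_add]; simp
  -- Step A
  have eA : T (-r) * (f * lbr d r L P) = f * Y1 := by
    rw [lbr]
    calc T (-r) * (f * (T r * Y1)) = (T (-r) * T r) * (f * Y1) := by ring
    _ = f * Y1 := by rw [hT, one_mul]
  -- Step B
  have eB : res (T (-r) * (h * (L ^ n * Pge (2 * r - k) (lbr d r f L)))) = res (P * Y2) := by
    have e1 : T (-r) * (h * (L ^ n * Pge (2 * r - k) (lbr d r f L)))
        = (T (-r) * W) * Pge (2 * r - k) (lbr d r f L) := by rw [hW]; ring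
    rw [e1, tr1_adjoint, tr1_Plt_T_mul]
    have e2 : -(2 * r - k) - -r = k - r := by ring
    rw [e2, ← hP, lbr, ← hY2]
    congr 1
    calc T (-r) * P * (T r * Y2) = (T (-r) * T r) * (P * Y2) := by ring
    _ = P * Y2 := by rw [hT, one_mul]
  rw [eA, eB, ← tr1_res_sub]
  have hkey : f * Y1 - P * Y2 = tder (L * cder d (f * P)) - cder d (L * tder (f * P)) := by
    rw [tr1_tder_mul hd_add hd_mul L (cder d (f * P)),
      tr1_cder_mul hd_add hd_mul L (tder (f * P)),
      ← tr1_comm hd_add (f * P),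
      tr1_tder_mul hd_add hd_mul f P, tr1_cder_mul hd_add hd_mul f P,
      tr1_cder_add hd_add, hY1, hY2]
    ring
  rw [hkey, tr1_res_sub, tr1_res_tder, tr1_res_cder hd0]
  exact ⟨-res (L * tder (f * P)), by rw [hdneg]; ring⟩
end
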